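/- For every axis-aligned square σ, the set 𝒩(σ) ∪ {C_σ} has at most 25 elements, where 𝒩(σ) is the set of dyadic cells of side length equal to side(C_σ), distinct from C_σ, that intersect the boundary of C_σ or intersect the boundary of a distinct cell of the same side length that intersects the boundary of C_σ. Consequently, for every finite set S of n axis-aligned squares, the set ⋃_{σ∈S} (𝒩(σ) ∪ {C_σ}) has at most 25·n elements. -/

import Mathlib

open Set

/-- A dyadic cell at level `level` (side length `2^level`) with lower-left corner
`(a·2^level, b·2^level)`. -/
structure DyadicCell where
  level : ℤ
  a : ℤ
  b : ℤ
deriving DecidableEq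

/-- The side length of a dyadic cell. -/
noncomputable def DyadicCell.side (C : DyadicCell) : ℝ := 2 ^ C.level

/-- The dyadic cell as a subset of the plane. -/
noncomputable def DyadicCell.toSet (C : DyadicCell) : Set (ℝ × ℝ) :=
  Set.Icc ((C.a : ℝ) * 2 ^ C.level) ((C.a + 1 : ℝ) * 2 ^ C.level) ×ˢ
    Set.Icc ((C.b : ℝ) * 2 ^ C.level) ((C.b + 1 : ℝ) * 2 ^ C.level)

/-- `5C`: the square obtained by scaling the cell `C` by a factor `5` about its center. -/
noncomputable def DyadicCell.scale5 (C : DyadicCell) : Set (ℝ × ℝ) :=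
  Set.Icc ((C.a - 2 : ℝ) * 2 ^ C.level) ((C.a + 3 : ℝ) * 2 ^ C.level) ×ˢ
    Set.Icc ((C.b - 2 : ℝ) * 2 ^ C.level) ((C.b + 3 : ℝ) * 2 ^ C.level)

/-- An axis-aligned square `[x, x+s] × [y, y+s]` of side length `s > 0`. -/
structure Square where
  x : ℝ
  y : ℝ
  s : ℝ
  s_pos : 0 < s

/-- The square as a subset of the plane. -/
noncomputable def Square.toSet (σ : Square) : Set (ℝ × ℝ) :=
  Set.Icc σ.x (σ.x + σ.s) ×ˢ Set.Icc σ.y (σ.y + σ.s)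

/-- The center of a square. -/
noncomputable def Square.center (σ : Square) : ℝ × ℝ := (σ.x + σ.s / 2, σ.y + σ.s / 2)

/-- `C` is a storing cell of `σ`: a dyadic cell of maximal side length among those that
contain the center of `σ` and are contained in `σ`. -/
def IsStoringCell (σ : Square) (C : DyadicCell) : Prop :=
  σ.center ∈ C.toSet ∧ C.toSet ⊆ σ.toSet ∧
    ∀ D : DyadicCell, σ.center ∈ D.toSet → D.toSet ⊆ σ.toSet → D.side ≤ C.side

/-- `𝒩(σ)` relative to the storing cell `Cσ`: dyadic cells of side length `side(Cσ)`,
distinct from `Cσ`, that intersect the boundary of `Cσ` or intersect the boundary of a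
distinct cell of the same side length that intersects the boundary of `Cσ`. -/
def nbhd (Cσ : DyadicCell) : Set DyadicCell :=
  {D | D.level = Cσ.level ∧ D ≠ Cσ ∧
    ((D.toSet ∩ frontier Cσ.toSet).Nonempty ∨
      ∃ E : DyadicCell, E.level = Cσ.level ∧ E ≠ Cσ ∧
        (E.toSet ∩ frontier Cσ.toSet).Nonempty ∧ (D.toSet ∩ frontier E.toSet).Nonempty)}


lemma DyadicCell.toSet_closed (C : DyadicCell) : IsClosed C.toSet :=
  (isClosed_Icc.prod isClosed_Icc)

lemma adj_of_inter {D E : DyadicCell} (hl : D.level = E.level)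
    (h : (D.toSet ∩ E.toSet).Nonempty) :
    E.a ≤ D.a + 1 ∧ D.a ≤ E.a + 1 ∧ E.b ≤ D.b + 1 ∧ D.b ≤ E.b + 1 := by
  obtain ⟨p, hD, hE⟩ := h
  simp only [DyadicCell.toSet, Set.mem_prod, Set.mem_Icc] at hD hE
  rw [hl] at hD
  have hs : (0:ℝ) < 2 ^ E.level := by positivity
  refine ⟨?_, ?_, ?_, ?_⟩
  · have : (E.a : ℝ) * 2 ^ E.level ≤ ((D.a:ℝ) + 1) * 2 ^ E.level :=
      le_trans hE.1.1 hD.1.2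
    have := (mul_le_mul_iff_left₀ hs).1 this
    have : E.a ≤ D.a + 1 := by exact_mod_cast this
    omega
  · have : (D.a : ℝ) * 2 ^ E.level ≤ ((E.a:ℝ) + 1) * 2 ^ E.level :=
      le_trans hD.1.1 hE.1.2
    have := (mul_le_mul_iff_left₀ hs).1 this
    have : D.a ≤ E.a + 1 := by exact_mod_cast this
    omega
  · have : (E.b : ℝ) * 2 ^ E.level ≤ ((D.b:ℝ) + 1) * 2 ^ E.level :=
      le_trans hE.2.1 hD.2.2
    have := (mul_le_mul_iff_left₀ hs).1 this
    have : E.b ≤ D.b + 1 := by exact_mod_cast this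
    omega
  · have : (D.b : ℝ) * 2 ^ E.level ≤ ((E.b:ℝ) + 1) * 2 ^ E.level :=
      le_trans hD.2.1 hE.2.2
    have := (mul_le_mul_iff_left₀ hs).1 this
    have : D.b ≤ E.b + 1 := by exact_mod_cast this
    omega

lemma adj_of_frontier {D E : DyadicCell} (hl : D.level = E.level)
    (h : (D.toSet ∩ frontier E.toSet).Nonempty) :
    E.a ≤ D.a + 1 ∧ D.a ≤ E.a + 1 ∧ E.b ≤ D.b + 1 ∧ D.b ≤ E.b + 1 := by
  apply adj_of_inter hl
  exact h.mono (Set.inter_subset_inter_right _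
    (E.toSet_closed.frontier_subset))

lemma nbhd_card (Cσ : DyadicCell) : (nbhd Cσ ∪ {Cσ}).encard ≤ 25 := by
  classical
  set F : Finset DyadicCell :=
    ((Finset.Icc (Cσ.a - 2) (Cσ.a + 2)) ×ˢ (Finset.Icc (Cσ.b - 2) (Cσ.b + 2))).image
      (fun p => DyadicCell.mk Cσ.level p.1 p.2) with hF
  have hsub : (nbhd Cσ ∪ {Cσ}) ⊆ ↑F := by
    intro D hD
    have hmem : D.level = Cσ.level ∧ Cσ.a - 2 ≤ D.a ∧ D.a ≤ Cσ.a + 2 ∧ Cσ.b - 2 ≤ D.b ∧ D.b ≤ Cσ.b + 2 := by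
      rcases hD with hD | hD
      · obtain ⟨hl, _, h | ⟨E, hEl, _, hE1, hE2⟩⟩ := hD
        · have := adj_of_frontier hl h
          exact ⟨hl, by omega, by omega, by omega, by omega⟩
        · have h1 := adj_of_frontier hEl hE1
          have h2 := adj_of_frontier (hl.trans hEl.symm) hE2
          exact ⟨hl, by omega, by omega, by omega, by omega⟩
      · rw [Set.mem_singleton_iff] at hD
        subst hD; exact ⟨rfl, by omega, by omega, by omega, by omega⟩
    simp only [hF, Finset.coe_image, Set.mem_image, Finset.mem_coe, Finset.mem_product,
      Finset.mem_Icc, Prod.exists]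
    refine ⟨D.a, D.b, ⟨⟨by omega, by omega⟩, ⟨by omega, by omega⟩⟩, ?_⟩
    cases D; simp_all
  calc (nbhd Cσ ∪ {Cσ}).encard ≤ (↑F : Set DyadicCell).encard := Set.encard_mono hsub
    _ = F.card := Set.encard_coe_eq_coe_finsetCard F
    _ ≤ 25 := by
        have : F.card ≤ 25 := by
          refine le_trans (Finset.card_image_le) ?_
          rw [Finset.card_product, Int.card_Icc, Int.card_Icc]
          have ha : Cσ.a + 2 + 1 - (Cσ.a - 2) = 5 := by ring
          have hb : Cσ.b + 2 + 1 - (Cσ.b - 2) = 5 := by ring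
          rw [ha, hb]
          rfl
        exact_mod_cast this

theorem statement3 (c : Square → DyadicCell) (hc : ∀ σ : Square, IsStoringCell σ (c σ)) :
    (∀ σ : Square, (nbhd (c σ) ∪ {c σ}).encard ≤ 25) ∧
    (∀ (S : Finset Square) (n : ℕ), S.card = n →
      (⋃ σ ∈ S, (nbhd (c σ) ∪ {c σ})).encard ≤ (25 * n : ℕ)) := by
  classical
  refine ⟨fun σ => nbhd_card (c σ), ?_⟩
  intro S n hn
  subst hn
  induction S using Finset.induction_on with
  | empty => simp
  | @insert a s hx ih =>
    rw [Finset.set_biUnion_insert, Finset.card_insert_of_notMem hx]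
    refine le_trans (Set.encard_union_le _ _) ?_
    calc (nbhd (c a) ∪ {c a}).encard + (⋃ σ ∈ s, (nbhd (c σ) ∪ {c σ})).encard
        ≤ 25 + (25 * s.card : ℕ) := add_le_add (nbhd_card (c a)) ih
      _ = (25 * (s.card + 1) : ℕ) := by push_cast; ring
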